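/- Let b ≥ 1, m ≥ 1 and τ ∈ {τ^b_0, τ^b_1}. If (sup, sig) is a τ-region of the union K = U(H_2, D_{0,1},…,D_{6m−1,1}) that solves the SSP atom (h_{2,0}, h_{2,b}), then either sig(k_j) = (0,b) for all j ∈ {0,…,6m−1}, or sig(k_j) = (b,0) for all j ∈ {0,…,6m−1}. -/

import Mathlib

/-! ## Transition systems -/

/-- A transition system over ambient state type `S` and event type `E`:
a set of states, a set of events, and a (deterministic or not) labeled
transition relation whose transitions stay inside the state/event sets. -/
structure TS (S E : Type) where
  states : Set S
  events : Set E
  tr : S → E → S → Prop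
  tr_mem : ∀ ⦃s e s'⦄, tr s e s' → s ∈ states ∧ e ∈ events ∧ s' ∈ states

/-- Event `e` occurs at state `s`. -/
def TS.occurs {S E : Type} (A : TS S E) (e : E) (s : S) : Prop := ∃ s', A.tr s e s'

/-! ## The types of nets `τ^b_t`, `t ∈ {0,1,2,3}` -/

/-- Events of the types of nets: pairs `(m,n)` or group events `c ∈ ℤ_{b+1}`. -/
inductive Tev where
  | pr (m n : ℕ)
  | gr (c : ℕ)
deriving DecidableEq

def Tev.minus : Tev → ℕ | .pr m _ => m | .gr _ => 0
def Tev.plus : Tev → ℕ | .pr _ n => n | .gr _ => 0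
def Tev.absv : Tev → ℕ | .pr _ _ => 0 | .gr c => c

/-- Membership in the event set of the type `τ^b_t`:
for `t ∈ {1,3}` (pure types) the pair events `(m,n)` with `m,n ≥ 1` are discarded;
for `t ∈ {2,3}` the pair `(0,0)` is discarded and the group events `0,…,b` are present;
for `t ∈ {0,1}` there are no group events. -/
def tevOk (b t : ℕ) : Tev → Prop
  | .pr m n => m ≤ b ∧ n ≤ b ∧ ((t = 1 ∨ t = 3) → (m = 0 ∨ n = 0)) ∧
      ((t = 2 ∨ t = 3) → ¬(m = 0 ∧ n = 0))
  | .gr c => c ≤ b ∧ (t = 2 ∨ t = 3)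

/-- The partial transition function of the types `τ^b_t` on the states `{0,…,b}`. -/
def tevStep (b s : ℕ) : Tev → Option ℕ
  | .pr m n => if m ≤ s ∧ s - m + n ≤ b then some (s - m + n) else none
  | .gr c => some ((s + c) % (b + 1))

/-! ## Regions, ESSP and SSP -/

/-- A `τ^b_t`-region of a transition system `A`. -/
structure Region (b t : ℕ) {S E : Type} (A : TS S E) where
  sup : S → ℕ
  sig : E → Tev
  sup_le : ∀ s ∈ A.states, sup s ≤ b
  sig_ok : ∀ e ∈ A.events, tevOk b t (sig e)
  resp : ∀ ⦃s e s'⦄, A.tr s e s' → tevStep b (sup s) (sig e) = some (sup s')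

/-- A region solves the ESSP atom `(e,s)` if `sig e` does not occur at `sup s` in `τ`. -/
def Region.solvesESSP {b t : ℕ} {S E : Type} {A : TS S E} (R : Region b t A)
    (e : E) (s : S) : Prop :=
  tevStep b (R.sup s) (R.sig e) = none

/-- A region solves the SSP atom `(s,s')` if `sup s ≠ sup s'`. -/
def Region.solvesSSP {b t : ℕ} {S E : Type} {A : TS S E} (R : Region b t A)
    (s s' : S) : Prop :=
  R.sup s ≠ R.sup s'

/-- `A` has the `τ^b_t`-ESSP: every ESSP atom is solvable. -/
def TS.hasESSP (b t : ℕ) {S E : Type} (A : TS S E) : Prop :=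
  ∀ e ∈ A.events, ∀ s ∈ A.states, ¬ A.occurs e s → ∃ R : Region b t A, R.solvesESSP e s

/-- `A` has the `τ^b_t`-SSP: every SSP atom is solvable. -/
def TS.hasSSP (b t : ℕ) {S E : Type} (A : TS S E) : Prop :=
  ∀ s ∈ A.states, ∀ s' ∈ A.states, s ≠ s' → ∃ R : Region b t A, R.solvesSSP s s'

/-- `A` is `τ^b_t`-feasible. -/
def TS.feasible (b t : ℕ) {S E : Type} (A : TS S E) : Prop :=
  A.hasESSP b t ∧ A.hasSSP b t

/-! ## Combinators: linear TSs, relabeled states, unions -/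

/-- The linear TS given by the word `w`: states `0,…,w.length`, and an
`e`-labeled transition from `s` to `s+1` whenever `w[s] = e`. -/
def TS.chain {E : Type} (w : List E) : TS ℕ E where
  states := {s | s ≤ w.length}
  events := {e | e ∈ w}
  tr s e s' := w[s]? = some e ∧ s' = s + 1
  tr_mem := by
    rintro s e s' ⟨h, rfl⟩
    have hs : s < w.length := by
      by_contra hc
      rw [List.getElem?_eq_none (Nat.le_of_not_lt hc)] at h
      cases h
    obtain ⟨hlt, rfl⟩ := List.getElem?_eq_some_iff.mp h
    exact ⟨Nat.le_of_lt hs, List.getElem_mem hlt, hs⟩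

/-- Renaming the states of a TS along `f`. -/
def TS.mapStates {S S' E : Type} (f : S → S') (A : TS S E) : TS S' E where
  states := f '' A.states
  events := A.events
  tr s e s' := ∃ a a', A.tr a e a' ∧ s = f a ∧ s' = f a'
  tr_mem := by
    rintro s e s' ⟨a, a', h, rfl, rfl⟩
    obtain ⟨h1, h2, h3⟩ := A.tr_mem h
    exact ⟨⟨a, h1, rfl⟩, h2, ⟨a', h3, rfl⟩⟩

/-- The union `U(A_i)_{i : ι}` of a family of TSs over the same ambient types. -/
def TS.unionFam {ι S E : Type} (F : ι → TS S E) : TS S E where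
  states := ⋃ i, (F i).states
  events := ⋃ i, (F i).events
  tr s e s' := ∃ i, (F i).tr s e s'
  tr_mem := by
    rintro s e s' ⟨i, h⟩
    obtain ⟨h1, h2, h3⟩ := (F i).tr_mem h
    exact ⟨Set.mem_iUnion.2 ⟨i, h1⟩, Set.mem_iUnion.2 ⟨i, h2⟩, Set.mem_iUnion.2 ⟨i, h3⟩⟩

/-- The SSP for a union: all SSP atoms given by distinct states of the *same*
constituent are solvable by regions of the union. -/
def unionSSP (b t : ℕ) {ι S E : Type} (F : ι → TS S E) : Prop :=
  ∀ i : ι, ∀ s ∈ (F i).states, ∀ s' ∈ (F i).states, s ≠ s' →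
    ∃ R : Region b t (TS.unionFam F), R.solvesSSP s s'
/-! ## Cubic monotone one-in-three 3-SAT -/

/-- An instance `φ = {C_0,…,C_{m-1}}` of cubic monotone one-in-three 3-SAT with
variables `V(φ) = {X_0,…,X_{m-1}}` (identified with `Fin m`): every clause
`C_i = {X_{i,0}, X_{i,1}, X_{i,2}}` consists of three distinct variables and every
variable occurs in exactly three clauses. -/
structure SatInstance (m : ℕ) where
  C : Fin m → Fin 3 → Fin m
  clause_distinct : ∀ i : Fin m, Function.Injective (C i)
  cubic : ∀ v : Fin m,
    (Finset.univ.filter (fun p : Fin m × Fin 3 => C p.1 p.2 = v)).card = 3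

/-- `M` is a one-in-three model of `φ`: every clause contains exactly one variable of `M`. -/
def SatInstance.model {m : ℕ} (φ : SatInstance m) (M : Set (Fin m)) : Prop :=
  ∀ i : Fin m, ∃! r : Fin 3, φ.C i r ∈ M

/-! ## Events of the gadgets -/

inductive Ev where
  | k | z | z0 | z1 | o0 | o1 | o2 | u
  | kj (j : ℕ)  -- the interface events k_j
  | x (i : ℕ)   -- the events x_i
  | p (i : ℕ)   -- the events p_i
  | vj (j : ℕ)  -- the events v_j
  | X (v : ℕ)   -- the variable events X_v
deriving DecidableEq

/-! ## The gadget TSs (states are pairs (tag, position)) -/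

/-- `H_0`, with `h_{0,i} = (0,i)`. -/
def H0 (b : ℕ) : TS (ℕ × ℕ) Ev :=
  (TS.chain (List.replicate b Ev.k ++ List.replicate b Ev.z ++ [Ev.o0] ++
    List.replicate b Ev.k ++ List.replicate b Ev.z ++ List.replicate b Ev.o1 ++
    List.replicate b Ev.k)).mapStates (fun i => (0, i))

/-- `H_1`, with `h_{1,i} = (0,i)`. -/
def H1 (b : ℕ) : TS (ℕ × ℕ) Ev :=
  (TS.chain (List.replicate b Ev.k ++ [Ev.z0, Ev.o0] ++ List.replicate b Ev.k ++
    [Ev.z1, Ev.z0, Ev.o2] ++ List.replicate b Ev.k)).mapStates (fun i => (0, i))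

/-- `H_2`, with `h_{2,i} = (0,i)`. -/
def H2 (b : ℕ) : TS (ℕ × ℕ) Ev :=
  (TS.chain (List.replicate b Ev.k ++ [Ev.o0] ++ List.replicate b Ev.k ++
    [Ev.o2] ++ List.replicate b Ev.k)).mapStates (fun i => (0, i))

/-- `D_{j,0}`, with `d_{j,0,i} = (j+1,i)`. -/
def D0 (b j : ℕ) : TS (ℕ × ℕ) Ev :=
  (TS.chain ([Ev.o0, Ev.kj j] ++ List.replicate (b+1) Ev.o1)).mapStates
    (fun i => (j + 1, i))

/-- `D_{j,1}`, with `d_{j,1,i} = (j+1,i)`. -/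
def D1 (b j : ℕ) : TS (ℕ × ℕ) Ev :=
  (TS.chain [Ev.o0, Ev.kj j, Ev.o2]).mapStates (fun i => (j + 1, i))

/-- The word of the gadget `T_{i,a}` (`a ∈ {0,1,2}`) of the translator `T`. -/
def Tword (b : ℕ) {m : ℕ} (φ : SatInstance m) (i : Fin m) (a : Fin 3) : List Ev :=
  if a = 0 then
    [Ev.kj (6 * (i : ℕ))] ++ List.replicate b (Ev.X ((φ.C i 0 : Fin m) : ℕ)) ++
    [Ev.x (i : ℕ)] ++ List.replicate b (Ev.X ((φ.C i 2 : Fin m) : ℕ)) ++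
    [Ev.kj (6 * (i : ℕ) + 1)]
  else if a = 1 then
    [Ev.kj (6 * (i : ℕ) + 2)] ++ List.replicate b (Ev.X ((φ.C i 1 : Fin m) : ℕ)) ++
    [Ev.p (i : ℕ), Ev.kj (6 * (i : ℕ) + 3)]
  else
    [Ev.kj (6 * (i : ℕ) + 4), Ev.x (i : ℕ), Ev.p (i : ℕ), Ev.kj (6 * (i : ℕ) + 5)]

/-- The gadget `T_{i,a}` of the translator `T`, with states `t_{i,a,pos} = (tag, pos)`. -/
def Tgad (b tag : ℕ) {m : ℕ} (φ : SatInstance m) (i : Fin m) (a : Fin 3) :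
    TS (ℕ × ℕ) Ev :=
  (TS.chain (Tword b φ i a)).mapStates (fun pos => (tag, pos))

/-- The translator `T = U(T_{0,0}, T_{0,1}, T_{0,2}, …, T_{m-1,2})` (standalone,
with `t_{i,a,pos} = (3i+a+1, pos)`). -/
def Ttrans (b : ℕ) {m : ℕ} (φ : SatInstance m) : TS (ℕ × ℕ) Ev :=
  TS.unionFam (fun q : Fin m × Fin 3 => Tgad b (3 * (q.1 : ℕ) + (q.2 : ℕ) + 1) φ q.1 q.2)

/-- `H_3`, with `h_{3,0,i} = (0,i)` and `h_{3,1,i} = (1,i)`: the union of the path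
`h_{3,0,0} --k^b--> h_{3,0,b}` and the path
`h_{3,0,0} --u--> h_{3,1,0} --k^{b-1}--> h_{3,1,b-1} --z--> h_{3,0,b}`. -/
def H3 (b : ℕ) : TS (ℕ × ℕ) Ev :=
  TS.unionFam (fun c : Bool =>
    if c then (TS.chain (List.replicate b Ev.k)).mapStates (fun i => (0, i))
    else (TS.chain ([Ev.u] ++ List.replicate (b-1) Ev.k ++ [Ev.z])).mapStates
      (fun i => if i = 0 then (0, 0) else if i = b + 1 then (0, b) else (1, i - 1)))

/-- The set `E_0 = {(m,m) : 1 ≤ m ≤ b} ∪ {0}`. -/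
def Ezero (b : ℕ) : Set Tev :=
  {e | (∃ q, 1 ≤ q ∧ q ≤ b ∧ e = Tev.pr q q) ∨ e = Tev.gr 0}

/-- The first row `f_{j,0,0} --k^b--> f_{j,0,b}` of `F_j`, with `f_{j,0,i} = (4j+2, i)`. -/
def Fch0 (b j : ℕ) : TS (ℕ × ℕ) Ev :=
  (TS.chain (List.replicate b Ev.k)).mapStates (fun i => (4 * j + 2, i))

/-- The second row `f_{j,0,0} --v_j--> f_{j,1,0} --k^{b-1}--> f_{j,1,b-1} --X_j--> f_{j,0,b}`
of `F_j`, with `f_{j,1,i} = (4j+3, i)`. -/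
def Fch1 (b j : ℕ) : TS (ℕ × ℕ) Ev :=
  (TS.chain ([Ev.vj j] ++ List.replicate (b-1) Ev.k ++ [Ev.X j])).mapStates
    (fun i => if i = 0 then (4 * j + 2, 0) else if i = b + 1 then (4 * j + 2, b)
      else (4 * j + 3, i - 1))

/-- `F_j` as the union of its two rows. -/
def Fgad (b j : ℕ) : TS (ℕ × ℕ) Ev :=
  TS.unionFam (fun c : Bool => if c then Fch0 b j else Fch1 b j)

/-- `G_j`, with `g_{j,i} = (4j+4, i)`. -/
def Ggad (b j : ℕ) : TS (ℕ × ℕ) Ev :=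
  (TS.chain (List.replicate b Ev.k ++ [Ev.X j])).mapStates (fun i => (4 * j + 4, i))

/-- The clause gadget `T_i` (of the translator for the group-extended types),
with `t_{i,pos} = (4i+5, pos)`. -/
def Tgad2 (b : ℕ) {m : ℕ} (φ : SatInstance m) (i : Fin m) : TS (ℕ × ℕ) Ev :=
  (TS.chain (List.replicate b Ev.k ++
    [Ev.X ((φ.C i 0 : Fin m) : ℕ), Ev.X ((φ.C i 1 : Fin m) : ℕ),
     Ev.X ((φ.C i 2 : Fin m) : ℕ), Ev.z] ++ List.replicate b Ev.k)).mapStates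
    (fun pos => (4 * (i : ℕ) + 5, pos))

/-- The translator `T_τ = U(F_0, G_0, …, F_{m-1}, G_{m-1}, T_0, …, T_{m-1})`
for the group-extended types. -/
def Ttrans2fam (b : ℕ) {m : ℕ} (φ : SatInstance m) : Fin m × Fin 3 → TS (ℕ × ℕ) Ev :=
  fun q => if q.2 = 0 then Fgad b (q.1 : ℕ)
    else if q.2 = 1 then Ggad b (q.1 : ℕ) else Tgad2 b φ q.1

def Ttrans2 (b : ℕ) {m : ℕ} (φ : SatInstance m) : TS (ℕ × ℕ) Ev :=
  TS.unionFam (Ttrans2fam b φ)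
/-! ## The key unions and the unions of key and translator -/

/-- The family of constituents of the key `K_{τ^b_0} = U(H_0, D_{0,0},…,D_{6m-1,0})`. -/
def K0fam (b m : ℕ) : Option (Fin (6 * m)) → TS (ℕ × ℕ) Ev
  | none => H0 b
  | some j => D0 b (j : ℕ)

def K0 (b m : ℕ) : TS (ℕ × ℕ) Ev := TS.unionFam (K0fam b m)

/-- The family of constituents of the key `K_{τ^b_1} = U(H_1, D_{0,1},…,D_{6m-1,1})`. -/
def K1fam (b m : ℕ) : Option (Fin (6 * m)) → TS (ℕ × ℕ) Ev
  | none => H1 b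
  | some j => D1 b (j : ℕ)

def K1 (b m : ℕ) : TS (ℕ × ℕ) Ev := TS.unionFam (K1fam b m)

/-- The family of constituents of the key `K = U(H_2, D_{0,1},…,D_{6m-1,1})`. -/
def K2fam (b m : ℕ) : Option (Fin (6 * m)) → TS (ℕ × ℕ) Ev
  | none => H2 b
  | some j => D1 b (j : ℕ)

def K2 (b m : ℕ) : TS (ℕ × ℕ) Ev := TS.unionFam (K2fam b m)

/-- The family of constituents of `U_{τ^b_0} = U(H_0, D_{0,0},…,D_{6m-1,0}, T)`. -/
def U0fam (b : ℕ) {m : ℕ} (φ : SatInstance m) :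
    Option (Fin (6 * m) ⊕ Fin m × Fin 3) → TS (ℕ × ℕ) Ev
  | none => H0 b
  | some (.inl j) => D0 b (j : ℕ)
  | some (.inr q) => Tgad b (6 * m + 1 + 3 * (q.1 : ℕ) + (q.2 : ℕ)) φ q.1 q.2

def U0 (b : ℕ) {m : ℕ} (φ : SatInstance m) : TS (ℕ × ℕ) Ev := TS.unionFam (U0fam b φ)

/-- The family of constituents of `U_{τ^b_1} = U(H_1, D_{0,1},…,D_{6m-1,1}, T)`. -/
def U1fam (b : ℕ) {m : ℕ} (φ : SatInstance m) :
    Option (Fin (6 * m) ⊕ Fin m × Fin 3) → TS (ℕ × ℕ) Ev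
  | none => H1 b
  | some (.inl j) => D1 b (j : ℕ)
  | some (.inr q) => Tgad b (6 * m + 1 + 3 * (q.1 : ℕ) + (q.2 : ℕ)) φ q.1 q.2

def U1 (b : ℕ) {m : ℕ} (φ : SatInstance m) : TS (ℕ × ℕ) Ev := TS.unionFam (U1fam b φ)

/-- The family of constituents of `W = U(H_2, D_{0,1},…,D_{6m-1,1}, T)`. -/
def Wfam (b : ℕ) {m : ℕ} (φ : SatInstance m) :
    Option (Fin (6 * m) ⊕ Fin m × Fin 3) → TS (ℕ × ℕ) Ev
  | none => H2 b
  | some (.inl j) => D1 b (j : ℕ)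
  | some (.inr q) => Tgad b (6 * m + 1 + 3 * (q.1 : ℕ) + (q.2 : ℕ)) φ q.1 q.2

def Wun (b : ℕ) {m : ℕ} (φ : SatInstance m) : TS (ℕ × ℕ) Ev := TS.unionFam (Wfam b φ)

/-- The family of constituents of
`U_τ = U(H_3, F_0, G_0, …, F_{m-1}, G_{m-1}, T_0, …, T_{m-1})` for `τ ∈ {τ^b_2, τ^b_3}`. -/
def U2fam (b : ℕ) {m : ℕ} (φ : SatInstance m) :
    Option (Fin m × Fin 3) → TS (ℕ × ℕ) Ev
  | none => H3 b
  | some q => Ttrans2fam b φ q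

def U2 (b : ℕ) {m : ℕ} (φ : SatInstance m) : TS (ℕ × ℕ) Ev := TS.unionFam (U2fam b φ)

/-! ## The joining `A(U)` -/

/-- The joining `A(U)` of a union `U = U(A_0,…,A_n)` of initialized TSs (`A_i`
initialized at `s0 i`): fresh connector states `q_i = Sum.inr i`, fresh events
`w_{i+1} = Sum.inr (Sum.inl i)` (`i : Fin n`) and `y_i = Sum.inr (Sum.inr i)`,
and transitions `q_i --w_{i+1}--> q_{i+1}` and `q_i --y_i--> s0 i`. -/
def joining {S E : Type} {n : ℕ} (F : Fin (n + 1) → TS S E) (s0 : Fin (n + 1) → S)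
    (h0 : ∀ i, s0 i ∈ (F i).states) :
    TS (S ⊕ Fin (n + 1)) (E ⊕ (Fin n ⊕ Fin (n + 1))) where
  states := {st | (∃ a ∈ (TS.unionFam F).states, st = Sum.inl a) ∨ ∃ q, st = Sum.inr q}
  events := {ev | (∃ e ∈ (TS.unionFam F).events, ev = Sum.inl e) ∨ ∃ c, ev = Sum.inr c}
  tr st ev st' :=
    (∃ a e a', (TS.unionFam F).tr a e a' ∧
        st = Sum.inl a ∧ ev = Sum.inl e ∧ st' = Sum.inl a') ∨
    (∃ i : Fin n, st = Sum.inr i.castSucc ∧ ev = Sum.inr (Sum.inl i) ∧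
        st' = Sum.inr i.succ) ∨
    (∃ i : Fin (n + 1), st = Sum.inr i ∧ ev = Sum.inr (Sum.inr i) ∧
        st' = Sum.inl (s0 i))
  tr_mem := by
    rintro st ev st' (⟨a, e, a', h, rfl, rfl, rfl⟩ | ⟨i, rfl, rfl, rfl⟩ | ⟨i, rfl, rfl, rfl⟩)
    · obtain ⟨h1, h2, h3⟩ := (TS.unionFam F).tr_mem h
      exact ⟨Or.inl ⟨a, h1, rfl⟩, Or.inl ⟨e, h2, rfl⟩, Or.inl ⟨a', h3, rfl⟩⟩
    · exact ⟨Or.inr ⟨_, rfl⟩, Or.inr ⟨_, rfl⟩, Or.inr ⟨_, rfl⟩⟩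
    · exact ⟨Or.inr ⟨_, rfl⟩, Or.inr ⟨_, rfl⟩,
        Or.inl ⟨_, Set.mem_iUnion.2 ⟨i, h0 i⟩, rfl⟩⟩

/-! Every `k`-step shifts `sup` by the same amount `n - m`, where `sig(k) = (m,n)`. As
`sup(h_{2,0}) ≠ sup(h_{2,b})`, the `b` steps of the first `k`-block shift `sup` by `±b`, so all three
`k`-blocks of `H_2` run from `0` to `b` (or all from `b` to `0`). Hence `o_0` and `o_2` both jump
from `b` to `0`, i.e. both have signature `(b,0)` (or both `(0,b)`), and in `D_{j,1}` the event
`k_j`, squeezed between them, must jump from `0` to `b` (or from `b` to `0`). -/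

theorem tevStep_pr_eq_some {b s s' m n : ℕ} :
    tevStep b s (.pr m n) = some s' ↔ m ≤ s ∧ s' + m = s + n ∧ s' ≤ b := by
  simp only [tevStep]
  split_ifs with h <;> simp only [Option.some.injEq, false_iff] <;> omega

namespace Region

variable {b t : ℕ} {S E : Type} {A : TS S E} (R : Region b t A)

theorem exists_sig_eq_pr (ht : t = 0 ∨ t = 1) {e : E} (he : e ∈ A.events) :
    ∃ m n, R.sig e = .pr m n := by
  have hok := R.sig_ok e he
  rcases hsig : R.sig e with ⟨m, n⟩ | c
  · exact ⟨m, n, rfl⟩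
  · rw [hsig] at hok
    exact absurd hok.2 (by omega)

theorem sup_tr_of_sig_eq_pr {s s' : S} {e : E} {m n : ℕ} (h : A.tr s e s')
    (he : R.sig e = .pr m n) :
    m ≤ R.sup s ∧ R.sup s' + m = R.sup s + n ∧ R.sup s ≤ b ∧ R.sup s' ≤ b := by
  have hstep := R.resp h
  rw [he, tevStep_pr_eq_some] at hstep
  exact ⟨hstep.1, hstep.2.1, R.sup_le s (A.tr_mem h).1, hstep.2.2⟩

theorem sup_run {e : E} {m n : ℕ} (he : R.sig e = .pr m n) {p : ℕ → S} {len : ℕ}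
    (hp : ∀ i < len, A.tr (p i) e (p (i + 1))) :
    (R.sup (p len) : ℤ) = R.sup (p 0) + len * ((n : ℤ) - m) := by
  induction len with
  | zero => simp
  | succ len ih =>
    have hstep := (R.sup_tr_of_sig_eq_pr (hp len len.lt_succ_self) he).2.1
    have hrun := ih fun i hi => hp i (by omega)
    push_cast
    linarith

theorem sig_eq_pr_zero_b_of_between {s₀ s₁ s₂ s₃ : S} {a c a' : E} {m n : ℕ}
    (h₁ : A.tr s₀ a s₁) (h₂ : A.tr s₁ c s₂) (h₃ : A.tr s₂ a' s₃)
    (ha : R.sig a = .pr b 0) (ha' : R.sig a' = .pr b 0) (hc : R.sig c = .pr m n) :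
    R.sig c = .pr 0 b := by
  have f₁ := R.sup_tr_of_sig_eq_pr h₁ ha
  have f₂ := R.sup_tr_of_sig_eq_pr h₂ hc
  have f₃ := R.sup_tr_of_sig_eq_pr h₃ ha'
  rw [hc, show m = 0 by omega, show n = b by omega]

theorem sig_eq_pr_b_zero_of_between {s₀ s₁ s₂ s₃ : S} {a c a' : E} {m n : ℕ}
    (h₁ : A.tr s₀ a s₁) (h₂ : A.tr s₁ c s₂) (h₃ : A.tr s₂ a' s₃)
    (ha : R.sig a = .pr 0 b) (ha' : R.sig a' = .pr 0 b) (hc : R.sig c = .pr m n) :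
    R.sig c = .pr b 0 := by
  have f₁ := R.sup_tr_of_sig_eq_pr h₁ ha
  have f₂ := R.sup_tr_of_sig_eq_pr h₂ hc
  have f₃ := R.sup_tr_of_sig_eq_pr h₃ ha'
  rw [hc, show m = b by omega, show n = 0 by omega]

end Region

theorem eq_one_or_eq_neg_one_of_bounded_shift {b x y : ℕ} {d : ℤ} (hx : x ≤ b) (hy : y ≤ b)
    (hxy : x ≠ y) (h : (y : ℤ) = x + b * d) :
    d = 1 ∧ x = 0 ∧ y = b ∨ d = -1 ∧ x = b ∧ y = 0 := by
  have hb : (0 : ℤ) < b := by omega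
  rcases lt_trichotomy d 0 with hd | rfl | hd
  · have : (b : ℤ) * d ≤ -b := by nlinarith
    have hxb : x = b ∧ y = 0 := by omega
    refine Or.inr ⟨?_, hxb⟩
    nlinarith
  · omega
  · have : (b : ℤ) ≤ b * d := by nlinarith
    have hxb : x = 0 ∧ y = b := by omega
    refine Or.inl ⟨?_, hxb⟩
    nlinarith

namespace K2

variable {b m : ℕ}

theorem tr_H2 {i : ℕ} {e : Ev}
    (h : (List.replicate b Ev.k ++ [Ev.o0] ++ List.replicate b Ev.k ++ [Ev.o2] ++
      List.replicate b Ev.k)[i]? = some e) :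
    (K2 b m).tr (0, i) e (0, i + 1) :=
  ⟨none, i, i + 1, ⟨h, rfl⟩, rfl, rfl⟩

theorem tr_k {i : ℕ} (hi : i < 3 * b + 2) (h₀ : i ≠ b) (h₂ : i ≠ 2 * b + 1) :
    (K2 b m).tr (0, i) Ev.k (0, i + 1) := by
  refine tr_H2 ?_
  simp only [List.getElem?_append, List.getElem?_replicate, List.length_append,
    List.length_replicate, List.length_cons, List.length_nil]
  split_ifs <;> first | rfl | omega

theorem tr_o0 : (K2 b m).tr (0, b) Ev.o0 (0, b + 1) :=
  tr_H2 (by simp)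

theorem tr_o2 : (K2 b m).tr (0, 2 * b + 1) Ev.o2 (0, 2 * b + 2) := by
  refine tr_H2 ?_
  simp only [List.getElem?_append, List.getElem?_replicate, List.length_append,
    List.length_replicate, List.length_cons, List.length_nil]
  split_ifs <;> first | omega | simp [show 2 * b + 1 - (b + 1 + b) = 0 by omega]

theorem mem_states_H2 {i : ℕ} (hi : i ≤ 3 * b + 2) : ((0 : ℕ), i) ∈ (K2 b m).states := by
  refine Set.mem_iUnion.2 ⟨none, i, ?_, rfl⟩
  change i ≤ List.length _
  simp only [List.length_append, List.length_replicate, List.length_cons, List.length_nil]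
  omega

theorem tr_D1 {j : ℕ} (hj : j < 6 * m) :
    (K2 b m).tr (j + 1, 0) Ev.o0 (j + 1, 1) ∧ (K2 b m).tr (j + 1, 1) (Ev.kj j) (j + 1, 2) ∧
      (K2 b m).tr (j + 1, 2) Ev.o2 (j + 1, 3) :=
  ⟨⟨some ⟨j, hj⟩, 0, 1, ⟨rfl, rfl⟩, rfl, rfl⟩, ⟨some ⟨j, hj⟩, 1, 2, ⟨rfl, rfl⟩, rfl, rfl⟩,
    ⟨some ⟨j, hj⟩, 2, 3, ⟨rfl, rfl⟩, rfl, rfl⟩⟩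

theorem sig_o0_o2_of_solvesSSP {t : ℕ} (hb : 1 ≤ b) (ht : t = 0 ∨ t = 1)
    (R : Region b t (K2 b m)) (hsolve : R.solvesSSP (0, 0) (0, b)) :
    R.sig Ev.o0 = .pr b 0 ∧ R.sig Ev.o2 = .pr b 0 ∨
      R.sig Ev.o0 = .pr 0 b ∧ R.sig Ev.o2 = .pr 0 b := by
  have hbound (i : ℕ) (hi : i ≤ 3 * b + 2) : R.sup (0, i) ≤ b := R.sup_le _ (mem_states_H2 hi)
  obtain ⟨mk, nk, hk⟩ := R.exists_sig_eq_pr ht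
    ((K2 b m).tr_mem (tr_k (i := 0) (by omega) (by omega) (by omega))).2.1
  have hblock (a : ℕ) (ha : a = 0 ∨ a = b + 1 ∨ a = 2 * b + 2) :
      (R.sup (0, a + b) : ℤ) = R.sup (0, a) + b * ((nk : ℤ) - mk) :=
    R.sup_run hk (p := fun i => (0, a + i)) fun i hi => tr_k (by omega) (by omega) (by omega)
  have block₁ := hblock 0 (by omega)
  have block₂ := hblock (b + 1) (by omega)
  have block₃ := hblock (2 * b + 2) (by omega)
  rw [zero_add] at block₁
  rw [show b + 1 + b = 2 * b + 1 by omega] at block₂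
  have hend := hbound (2 * b + 2 + b) (by omega)
  obtain ⟨m₀, n₀, h₀⟩ := R.exists_sig_eq_pr ht ((K2 b m).tr_mem tr_o0).2.1
  obtain ⟨m₂, n₂, h₂⟩ := R.exists_sig_eq_pr ht ((K2 b m).tr_mem tr_o2).2.1
  have f₀ := R.sup_tr_of_sig_eq_pr tr_o0 h₀
  have f₂ := R.sup_tr_of_sig_eq_pr tr_o2 h₂
  rw [h₀, h₂]
  simp only [Tev.pr.injEq]
  rcases eq_one_or_eq_neg_one_of_bounded_shift (hbound 0 (by omega)) (hbound b (by omega))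
    hsolve block₁ with ⟨hd, hends⟩ | ⟨hd, hends⟩ <;>
    simp only [hd, mul_one, mul_neg] at block₂ block₃ <;> omega

end K2

theorem stmt5_general (b t m : ℕ) (hb : 1 ≤ b) (ht : t = 0 ∨ t = 1)
    (R : Region b t (K2 b m)) (hsolve : R.solvesSSP (0, 0) (0, b)) :
    (∀ j < 6 * m, R.sig (Ev.kj j) = Tev.pr 0 b) ∨
    (∀ j < 6 * m, R.sig (Ev.kj j) = Tev.pr b 0) := by
  have hD (j : ℕ) (hj : j < 6 * m) := K2.tr_D1 (b := b) hj
  have hkj (j : ℕ) (hj : j < 6 * m) :=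
    R.exists_sig_eq_pr ht ((K2 b m).tr_mem (hD j hj).2.1).2.1
  rcases K2.sig_o0_o2_of_solvesSSP hb ht R hsolve with ⟨h₀, h₂⟩ | ⟨h₀, h₂⟩
  · refine Or.inl fun j hj => ?_
    obtain ⟨d₀, d₁, d₂⟩ := hD j hj
    obtain ⟨_, _, hk⟩ := hkj j hj
    exact R.sig_eq_pr_zero_b_of_between d₀ d₁ d₂ h₀ h₂ hk
  · refine Or.inr fun j hj => ?_
    obtain ⟨d₀, d₁, d₂⟩ := hD j hj
    obtain ⟨_, _, hk⟩ := hkj j hj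
    exact R.sig_eq_pr_b_zero_of_between d₀ d₁ d₂ h₀ h₂ hk

/-- for `τ ∈ {τ^b_0, τ^b_1}`, every `τ`-region of
`K = U(H_2, D_{0,1},…,D_{6m-1,1})` solving the SSP atom `(h_{2,0}, h_{2,b})` has
`sig(k_j) = (0,b)` for all `j`, or `sig(k_j) = (b,0)` for all `j`. -/
theorem stmt5 (b t m : ℕ) (hb : 1 ≤ b) (ht : t = 0 ∨ t = 1) (hm : 1 ≤ m)
    (R : Region b t (K2 b m)) (hsolve : R.solvesSSP (0, 0) (0, b)) :
    (∀ j < 6 * m, R.sig (Ev.kj j) = Tev.pr 0 b) ∨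
    (∀ j < 6 * m, R.sig (Ev.kj j) = Tev.pr b 0) :=
  stmt5_general b t m hb ht R hsolve
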